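/- Let H : R_{A₁} × ⋯ × R_{A_r} → R_B^{(r)} be an admissible r-nary transformation. Then for all finitely supported functions d(1), …, d(r) : ℕ → ℕ and all α_i ∈ R_{A_i} such that the monomial z^{d(i)} divides α_i for each i, the product monomial ∏_{i=1}^r z(i)^{d(i)} divides H(α₁, …, α_r) in R_B^{(r)}. -/

import Mathlib

/-! An admissible `r`-nary transformation
`H : R_{A₁} × ⋯ × R_{A_r} → R_B^{(r)}` preserves divisibility by monomials. -/

noncomputable section

/-- The additive subgroup of `MvPowerSeries σ' R` of series involving only finitely
many variables. -/
def finVar (σ' R : Type*) [CommRing R] : AddSubgroup (MvPowerSeries σ' R) where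
  carrier := {α | ∃ s : Finset σ', ∀ d : σ' →₀ ℕ, MvPowerSeries.coeff (R := R) d α ≠ 0 → d.support ⊆ s}
  zero_mem' := ⟨∅, fun d hd => absurd (map_zero (MvPowerSeries.coeff (R := R) d)) hd⟩
  add_mem' := by
    classical
    rintro a b ⟨s, hs⟩ ⟨t, ht⟩
    refine ⟨s ∪ t, fun d hd => ?_⟩
    by_cases ha : MvPowerSeries.coeff (R := R) d a = 0
    · have hb : MvPowerSeries.coeff (R := R) d b ≠ 0 := by
        intro hb
        exact hd (by rw [map_add, ha, hb, add_zero])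
      exact (ht d hb).trans Finset.subset_union_right
    · exact (hs d ha).trans Finset.subset_union_left
  neg_mem' := by
    rintro a ⟨s, hs⟩
    refine ⟨s, fun d hd => hs d fun h => hd ?_⟩
    rw [map_neg, h, neg_zero]

variable {σ' R : Type*} [CommRing R]

/-- Renaming the variables of a multivariate power series along a permutation of the
variable index set:  `z_j ↦ z_{e j}`. -/
def renameVars (e : Equiv.Perm σ') (α : MvPowerSeries σ' R) : MvPowerSeries σ' R :=
  fun d => MvPowerSeries.coeff (R := R) (Finsupp.equivMapDomain e.symm d) α

/-- The endomorphism of `MvPowerSeries σ' R` substituting `0` for the variable `z_v`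
(and fixing all other variables). -/
def substZeroAt (v : σ') (α : MvPowerSeries σ' R) : MvPowerSeries σ' R :=
  fun d => if d v = 0 then MvPowerSeries.coeff (R := R) d α else 0

/-- The endomorphism of `MvPowerSeries σ' R` substituting the variable `z_w` for the
variable `z_v` (and fixing all other variables). -/
def substVarAt (v w : σ') (α : MvPowerSeries σ' R) : MvPowerSeries σ' R :=
  fun d =>
    if d v = 0 then
      ∑ a ∈ Finset.range (d w + 1),
        MvPowerSeries.coeff (R := R) (Finsupp.update (Finsupp.update d w (d w - a)) v a) α
    else 0

/-- The permutation of the variables `z(i)_j` (indexed by `Fin r × ℕ`) acting by a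
permutation `σ` on the `i`-th block of variables and fixing all the other blocks. -/
def blockPerm {r : ℕ} (i : Fin r) (σ : Equiv.Perm ℕ) : Equiv.Perm (Fin r × ℕ) where
  toFun p := (p.1, if p.1 = i then σ p.2 else p.2)
  invFun p := (p.1, if p.1 = i then σ.symm p.2 else p.2)
  left_inv p := by
    obtain ⟨p1, p2⟩ := p
    by_cases h : p1 = i <;> simp [h]
  right_inv p := by
    obtain ⟨p1, p2⟩ := p
    by_cases h : p1 = i <;> simp [h]

/-- The embedding `j ↦ (i, j)` identifying the variables `z_j` with the `i`-th block
`z(i)_j` of target variables. -/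
def blockVar {r : ℕ} (i : Fin r) : ℕ ↪ Fin r × ℕ :=
  ⟨fun j => (i, j), fun a b h => by simpa using h⟩

namespace AuxAdm

open MvPowerSeries

variable {σ'' R : Type*} [CommRing R]

theorem upd_apply {σ : Type*} [DecidableEq σ] (f : σ →₀ ℕ) (a c : σ) (n : ℕ) :
    (f.update a n) c = if c = a then n else f c := by
  rw [Finsupp.coe_update, Function.update_apply]

theorem upd_apply' {σ : Type*} [DecidableEq σ] (f : σ →₀ ℕ) (a : σ) (n : ℕ) :
    (f.update a n) a = n := by simp [upd_apply]

theorem swap_finite {a b : ℕ} : {x | Equiv.swap a b x ≠ x}.Finite := by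
  apply Set.Finite.subset (Set.toFinite {a, b})
  intro x hx
  by_contra hc
  simp only [Set.mem_insert_iff, Set.mem_singleton_iff] at hc
  push_neg at hc
  exact hx (Equiv.swap_apply_of_ne_of_ne hc.1 hc.2)

theorem mem_finVar_iff {x : MvPowerSeries σ'' R} :
    x ∈ finVar σ'' R ↔ ∃ s : Finset σ'', ∀ d : σ'' →₀ ℕ,
      MvPowerSeries.coeff (R := R) d x ≠ 0 → d.support ⊆ s := Iff.rfl

theorem coeff_def (d : σ'' →₀ ℕ) (f : MvPowerSeries σ'' R) : coeff (R := R) d f = f d := rfl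

theorem emd_apply {σ τ : Type*} (e : σ ≃ τ) (l : σ →₀ ℕ) (b : τ) :
    Finsupp.equivMapDomain e l b = l (e.symm b) := rfl

theorem coeff_rename (τ : Equiv.Perm σ'') (X : MvPowerSeries σ'' R) (d : σ'' →₀ ℕ) :
    coeff (R := R) d (renameVars τ X) = coeff (R := R) (Finsupp.equivMapDomain τ.symm d) X := rfl

theorem emd_emd {σ : Type*} (τ : Equiv.Perm σ) (e : σ →₀ ℕ) :
    Finsupp.equivMapDomain τ.symm (Finsupp.equivMapDomain τ e) = e := by
  ext a
  rw [emd_apply, emd_apply]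
  simp

theorem rename_mem {τ : Equiv.Perm σ''} {x : MvPowerSeries σ'' R} (hx : x ∈ finVar σ'' R) :
    renameVars τ x ∈ finVar σ'' R := by
  classical
  obtain ⟨s, hs⟩ := hx
  refine ⟨s.image τ, fun d hd => ?_⟩
  intro j hj
  rw [Finsupp.mem_support_iff] at hj
  rw [coeff_rename] at hd
  have h2 : (Finsupp.equivMapDomain τ.symm d) (τ.symm j) ≠ 0 := by
    rw [emd_apply]; simpa using hj
  have := hs _ hd (Finsupp.mem_support_iff.mpr h2)
  exact Finset.mem_image.mpr ⟨τ.symm j, this, by simp⟩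

theorem monomial_dvd_coeff {σ : Type*} (D : σ →₀ ℕ) (X : MvPowerSeries σ R)
    (h : monomial (R := R) D 1 ∣ X) : ∀ e, ¬ D ≤ e → coeff (R := R) e X = 0 := by
  classical
  obtain ⟨Y, rfl⟩ := h
  intro e he
  rw [coeff_monomial_mul]
  simp [he]

theorem monomial_dvd_of_coeff {σ : Type*} (D : σ →₀ ℕ) (X : MvPowerSeries σ R)
    (h : ∀ e, ¬ D ≤ e → coeff (R := R) e X = 0) : monomial (R := R) D 1 ∣ X := by
  classical
  refine ⟨(fun e => coeff (R := R) (e + D) X : MvPowerSeries σ R), ?_⟩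
  ext e
  erw [coeff_monomial_mul]
  by_cases hD : D ≤ e
  · have h2 : coeff (R := R) (e - D) (fun e => coeff (R := R) (e + D) X : MvPowerSeries σ R)
        = coeff (R := R) (e - D + D) X := rfl
    rw [if_pos hD, h2, tsub_add_cancel_of_le hD, one_mul]
  · rw [if_neg hD, h e hD]

theorem prod_monomial {σ ι : Type*} (s : Finset ι) (D : ι → (σ →₀ ℕ)) :
    (∏ i ∈ s, monomial (R := R) (D i) 1) = monomial (R := R) (∑ i ∈ s, D i) 1 := by
  classical
  induction s using Finset.induction with
  | empty => simp [monomial_zero_one]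
  | insert a s h ih =>
      rw [Finset.prod_insert h, Finset.sum_insert h, ih, monomial_mul_monomial, one_mul]

theorem blockPerm_apply {r : ℕ} (i : Fin r) (σ : Equiv.Perm ℕ) (p : Fin r × ℕ) :
    blockPerm i σ p = (p.1, if p.1 = i then σ p.2 else p.2) := rfl

theorem blockPerm_symm_apply {r : ℕ} (i : Fin r) (σ : Equiv.Perm ℕ) (p : Fin r × ℕ) :
    (blockPerm i σ).symm p = (p.1, if p.1 = i then σ.symm p.2 else p.2) := rfl

end AuxAdm

namespace AuxAdm
open MvPowerSeries

section withH
variable {r : ℕ} {A : Fin r → Type*} [∀ i, CommRing (A i)] {B : Type*} [CommRing B]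
  (H : (∀ i, finVar ℕ (A i)) → finVar (Fin r × ℕ) B)

/-- transport of coefficients along renaming. -/
theorem transport
    (hHrename : ∀ (i : Fin r) (σ : Equiv.Perm ℕ), {x | σ x ≠ x}.Finite →
      ∀ (α : ∀ i, finVar ℕ (A i)) (β : finVar ℕ (A i)),
        (β : MvPowerSeries ℕ (A i)) = renameVars σ ↑(α i) →
        (H (Function.update α i β) : MvPowerSeries (Fin r × ℕ) B) =
          renameVars (blockPerm i σ) ↑(H α))
    (i : Fin r) (σ : Equiv.Perm ℕ) (hσ : {x | σ x ≠ x}.Finite)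
    (α : ∀ i, finVar ℕ (A i)) (e : (Fin r × ℕ) →₀ ℕ) :
    coeff (R := B) e ↑(H α) =
      coeff (R := B) (Finsupp.equivMapDomain (blockPerm i σ) e)
        ↑(H (Function.update α i ⟨renameVars σ ↑(α i), rename_mem (α i).2⟩)) := by
  have h := hHrename i σ hσ α ⟨renameVars σ ↑(α i), rename_mem (α i).2⟩ rfl
  rw [h, coeff_rename, emd_emd]

theorem abs_lemma
    (hHrename : ∀ (i : Fin r) (σ : Equiv.Perm ℕ), {x | σ x ≠ x}.Finite →
      ∀ (α : ∀ i, finVar ℕ (A i)) (β : finVar ℕ (A i)),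
        (β : MvPowerSeries ℕ (A i)) = renameVars σ ↑(α i) →
        (H (Function.update α i β) : MvPowerSeries (Fin r × ℕ) B) =
          renameVars (blockPerm i σ) ↑(H α))
    (hHeps : ∀ (i : Fin r) (α : ∀ i, finVar ℕ (A i)) (β : finVar ℕ (A i)),
        (β : MvPowerSeries ℕ (A i)) = substZeroAt 0 ↑(α i) →
        (H (Function.update α i β) : MvPowerSeries (Fin r × ℕ) B) =
          substZeroAt (i, 0) ↑(H α))
    (i : Fin r) (j : ℕ) (α : ∀ i, finVar ℕ (A i))
    (habs : ∀ d : ℕ →₀ ℕ, coeff (R := A i) d ↑(α i) ≠ 0 → d j = 0)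
    (e : (Fin r × ℕ) →₀ ℕ) (he : e (i, j) ≠ 0) :
    coeff (R := B) e ↑(H α) = 0 := by
  classical
  set σ : Equiv.Perm ℕ := Equiv.swap 0 j with hσdef
  set α' := Function.update α i
    (⟨renameVars σ ↑(α i), rename_mem (α i).2⟩ : finVar ℕ (A i)) with hα'def
  have hα'i : (α' i : MvPowerSeries ℕ (A i)) = renameVars σ ↑(α i) := by
    rw [hα'def, Function.update_self]
  have habs0 : ∀ d : ℕ →₀ ℕ, coeff (R := A i) d ↑(α' i) ≠ 0 → d 0 = 0 := by
    intro d hd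
    rw [hα'i, coeff_rename] at hd
    have := habs _ hd
    rw [emd_apply] at this
    simpa [hσdef, Equiv.swap_apply_right] using this
  have hfix : substZeroAt ((i : Fin r), (0:ℕ)) (↑(H α') : MvPowerSeries (Fin r × ℕ) B)
      = ↑(H α') := by
    have h := hHeps i α' (α' i) ?_
    · rw [Function.update_eq_self] at h
      exact h.symm
    · funext dd
      show (α' i : MvPowerSeries ℕ (A i)) dd = if dd 0 = 0 then coeff (R := A i) dd ↑(α' i) else 0
      by_cases h0 : dd 0 = 0
      · rw [if_pos h0]; rfl
      · rw [if_neg h0]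
        by_contra hc
        exact h0 (habs0 dd hc)
  have htr := transport H hHrename i σ swap_finite α e
  rw [htr]
  set e' := Finsupp.equivMapDomain (blockPerm i σ) e with he'def
  have he'0 : e' ((i : Fin r), (0:ℕ)) ≠ 0 := by
    rw [he'def, emd_apply, blockPerm_symm_apply]
    simpa [hσdef] using he
  rw [← hα'def]
  conv_lhs => rw [← hfix]
  show (if e' ((i:Fin r),(0:ℕ)) = 0 then coeff (R := B) e' ↑(H α') else 0) = 0
  rw [if_neg he'0]

theorem keyj_of
    (hHrename : ∀ (i : Fin r) (σ : Equiv.Perm ℕ), {x | σ x ≠ x}.Finite →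
      ∀ (α : ∀ i, finVar ℕ (A i)) (β : finVar ℕ (A i)),
        (β : MvPowerSeries ℕ (A i)) = renameVars σ ↑(α i) →
        (H (Function.update α i β) : MvPowerSeries (Fin r × ℕ) B) =
          renameVars (blockPerm i σ) ↑(H α))
    (k : ℕ)
    (hkey : ∀ (α : ∀ i, finVar ℕ (A i)) (i : Fin r),
      (∀ d : ℕ →₀ ℕ, coeff (R := A i) d ↑(α i) ≠ 0 → k ≤ d 0) →
      ∀ e : (Fin r × ℕ) →₀ ℕ, e (i, 0) < k → coeff (R := B) e ↑(H α) = 0)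
    (j : ℕ) (α : ∀ i, finVar ℕ (A i)) (i : Fin r)
    (hdvdj : ∀ d : ℕ →₀ ℕ, coeff (R := A i) d ↑(α i) ≠ 0 → k ≤ d j)
    (e : (Fin r × ℕ) →₀ ℕ) (he : e (i, j) < k) :
    coeff (R := B) e ↑(H α) = 0 := by
  classical
  set σ : Equiv.Perm ℕ := Equiv.swap 0 j with hσdef
  set α' := Function.update α i
    (⟨renameVars σ ↑(α i), rename_mem (α i).2⟩ : finVar ℕ (A i)) with hα'def
  have hα'i : (α' i : MvPowerSeries ℕ (A i)) = renameVars σ ↑(α i) := by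
    rw [hα'def, Function.update_self]
  have hdvd0 : ∀ d : ℕ →₀ ℕ, coeff (R := A i) d ↑(α' i) ≠ 0 → k ≤ d 0 := by
    intro d hd
    rw [hα'i, coeff_rename] at hd
    have := hdvdj _ hd
    rw [emd_apply] at this
    simpa [hσdef, Equiv.swap_apply_right] using this
  have htr := transport H hHrename i σ swap_finite α e
  rw [htr, ← hα'def]
  apply hkey α' i hdvd0
  rw [emd_apply, blockPerm_symm_apply]
  simpa [hσdef] using he

theorem key
    (hH0 : ∀ α : ∀ i, finVar ℕ (A i), (∃ i, α i = 0) → H α = 0)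
    (hHrename : ∀ (i : Fin r) (σ : Equiv.Perm ℕ), {x | σ x ≠ x}.Finite →
      ∀ (α : ∀ i, finVar ℕ (A i)) (β : finVar ℕ (A i)),
        (β : MvPowerSeries ℕ (A i)) = renameVars σ ↑(α i) →
        (H (Function.update α i β) : MvPowerSeries (Fin r × ℕ) B) =
          renameVars (blockPerm i σ) ↑(H α))
    (hHeps : ∀ (i : Fin r) (α : ∀ i, finVar ℕ (A i)) (β : finVar ℕ (A i)),
        (β : MvPowerSeries ℕ (A i)) = substZeroAt 0 ↑(α i) →
        (H (Function.update α i β) : MvPowerSeries (Fin r × ℕ) B) =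
          substZeroAt (i, 0) ↑(H α))
    (hHdelta : ∀ (i : Fin r) (α : ∀ i, finVar ℕ (A i)) (β : finVar ℕ (A i)),
        (β : MvPowerSeries ℕ (A i)) = substVarAt 0 1 ↑(α i) →
        (H (Function.update α i β) : MvPowerSeries (Fin r × ℕ) B) =
          substVarAt (i, 0) (i, 1) ↑(H α)) :
    ∀ (k : ℕ) (α : ∀ i, finVar ℕ (A i)) (i : Fin r),
      (∀ d : ℕ →₀ ℕ, coeff (R := A i) d ↑(α i) ≠ 0 → k ≤ d 0) →
      ∀ e : (Fin r × ℕ) →₀ ℕ, e (i, 0) < k → coeff (R := B) e ↑(H α) = 0 := by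
  classical
  intro k
  induction k using Nat.strong_induction_on with
  | _ k IH =>
  match k, IH with
  | 0, _ => intro α i _ e he; omega
  | 1, _ =>
    intro α i hdvd e he
    have hβ : ((0 : finVar ℕ (A i)) : MvPowerSeries ℕ (A i)) = substZeroAt 0 ↑(α i) := by
      funext dd
      show (0 : MvPowerSeries ℕ (A i)) dd = if dd 0 = 0 then coeff (R := A i) dd ↑(α i) else 0
      by_cases h0 : dd 0 = 0
      · rw [if_pos h0]
        by_cases hc : coeff (R := A i) dd ↑(α i) = 0
        · rw [hc]; rfl
        · exact absurd (hdvd dd hc) (by omega)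
      · rw [if_neg h0]; rfl
    have h := hHeps i α 0 hβ
    have hz : H (Function.update α i 0) = 0 := hH0 _ ⟨i, Function.update_self i 0 α⟩
    rw [hz] at h
    have := congrFun h.symm e
    have he0 : e (i, 0) = 0 := by omega
    have hrw : (substZeroAt ((i : Fin r), (0:ℕ))
        (↑(H α) : MvPowerSeries (Fin r × ℕ) B)) e = coeff (R := B) e ↑(H α) := by
      show (if e (i,0) = 0 then coeff (R := B) e ↑(H α) else 0) = _
      rw [if_pos he0]
    rw [hrw] at this
    rw [this]
    rfl
  | (K + 2), IH =>
    intro α i hdvd e he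
    -- main subclaim: the case where `z₁` is absent from the `i`-th argument
    have main : ∀ (γ : ∀ i, finVar ℕ (A i)),
        (∀ d : ℕ →₀ ℕ, coeff (R := A i) d ↑(γ i) ≠ 0 → K + 2 ≤ d 0) →
        (∀ d : ℕ →₀ ℕ, coeff (R := A i) d ↑(γ i) ≠ 0 → d 1 = 0) →
        ∀ f : (Fin r × ℕ) →₀ ℕ, f (i, 0) < K + 2 → coeff (R := B) f ↑(H γ) = 0 := by
      intro γ hdvd0 habs1 f hf
      by_cases h1 : f (i, 1) = 0
      swap
      · exact abs_lemma H hHrename hHeps i 1 γ habs1 f h1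
      -- the spread series βs
      set βs : MvPowerSeries ℕ (A i) := fun dd =>
        if dd 0 = 1 then
          coeff (R := A i) ((dd.update 0 (dd 0 + dd 1)).update 1 0) ↑(γ i) else 0 with hβsdef
      obtain ⟨s', hs'⟩ := (γ i).2
      have hβmem : βs ∈ finVar ℕ (A i) := by
        refine ⟨insert 0 (insert 1 s'), fun dd hdd => ?_⟩
        rw [coeff_def, hβsdef] at hdd
        simp only at hdd
        by_cases h0 : dd 0 = 1
        · rw [if_pos h0] at hdd
          have hsub := hs' _ hdd
          intro j hj
          by_cases hj0 : j = 0
          · simp [hj0]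
          by_cases hj1 : j = 1
          · simp [hj1]
          have : ((dd.update 0 (dd 0 + dd 1)).update 1 0) j = dd j := by
            rw [upd_apply, if_neg hj1, upd_apply, if_neg hj0]
          have hmem : j ∈ ((dd.update 0 (dd 0 + dd 1)).update 1 0).support := by
            rw [Finsupp.mem_support_iff, this]
            exact Finsupp.mem_support_iff.mp hj
          exact Finset.mem_insert_of_mem (Finset.mem_insert_of_mem (hsub hmem))
        · rw [if_neg h0] at hdd; exact absurd rfl hdd
      have hP1 : ∀ dd : ℕ →₀ ℕ, coeff (R := A i) dd βs ≠ 0 → 1 ≤ dd 0 := by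
        intro dd hdd
        rw [coeff_def, hβsdef] at hdd
        simp only at hdd
        by_cases h0 : dd 0 = 1
        · omega
        · rw [if_neg h0] at hdd; exact absurd rfl hdd
      have hP2 : ∀ dd : ℕ →₀ ℕ, coeff (R := A i) dd βs ≠ 0 → K + 1 ≤ dd 1 := by
        intro dd hdd
        rw [coeff_def, hβsdef] at hdd
        simp only at hdd
        by_cases h0 : dd 0 = 1
        · rw [if_pos h0] at hdd
          have := hdvd0 _ hdd
          have hg0 : ((dd.update 0 (dd 0 + dd 1)).update 1 0) 0 = dd 0 + dd 1 := by
            rw [upd_apply, if_neg (by omega), upd_apply']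
          omega
        · rw [if_neg h0] at hdd; exact absurd rfl hdd
      have hP3 : substVarAt 0 1 βs = renameVars (Equiv.swap 0 1) ↑(γ i) := by
        funext f0
        show (if f0 0 = 0 then ∑ a ∈ Finset.range (f0 1 + 1),
            coeff (R := A i) (Finsupp.update (Finsupp.update f0 1 (f0 1 - a)) 0 a) βs else 0)
          = coeff (R := A i) (Finsupp.equivMapDomain (Equiv.swap 0 1).symm f0) ↑(γ i)
        set F := Finsupp.equivMapDomain (Equiv.swap 0 1).symm f0 with hFdef
        have hF0 : F 0 = f0 1 := by rw [hFdef, emd_apply]; simp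
        have hF1 : F 1 = f0 0 := by rw [hFdef, emd_apply]; simp
        have hFx : ∀ x, x ≠ 0 → x ≠ 1 → F x = f0 x := by
          intro x hx0 hx1
          rw [hFdef, emd_apply]
          simp [Equiv.swap_apply_of_ne_of_ne hx0 hx1]
        by_cases hf00 : f0 0 = 0
        swap
        · rw [if_neg hf00]
          by_contra hc
          exact hf00 (hF1 ▸ habs1 F (fun h => hc h.symm))
        rw [if_pos hf00]
        have hterm : ∀ b, coeff (R := A i)
            (Finsupp.update (Finsupp.update f0 1 (f0 1 - b)) 0 b) βs
            = if b = 1 then coeff (R := A i)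
              (((Finsupp.update (Finsupp.update f0 1 (f0 1 - b)) 0 b).update 0
                ((Finsupp.update (Finsupp.update f0 1 (f0 1 - b)) 0 b) 0 +
                 (Finsupp.update (Finsupp.update f0 1 (f0 1 - b)) 0 b) 1)).update 1 0)
              ↑(γ i) else 0 := by
          intro b
          rw [coeff_def, hβsdef]
          simp only
          rw [upd_apply']
        have hsum : (∑ a ∈ Finset.range (f0 1 + 1),
            coeff (R := A i) (Finsupp.update (Finsupp.update f0 1 (f0 1 - a)) 0 a) βs)
            = coeff (R := A i)
              (((Finsupp.update (Finsupp.update f0 1 (f0 1 - 1)) 0 1).update 0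
                ((Finsupp.update (Finsupp.update f0 1 (f0 1 - 1)) 0 1) 0 +
                 (Finsupp.update (Finsupp.update f0 1 (f0 1 - 1)) 0 1) 1)).update 1 0)
              ↑(γ i) := by
          rw [Finset.sum_eq_single 1]
          · rw [hterm, if_pos rfl]
          · intro b _ hb
            rw [hterm, if_neg hb]
          · intro hnot
            rw [hterm, if_pos rfl]
            have hf01 : f0 1 = 0 := by
              simp only [Finset.mem_range] at hnot; omega
            apply not_ne_iff.mp
            intro hc
            have := hdvd0 _ hc
            have : (((Finsupp.update (Finsupp.update f0 1 (f0 1 - 1)) 0 1).update 0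
                ((Finsupp.update (Finsupp.update f0 1 (f0 1 - 1)) 0 1) 0 +
                 (Finsupp.update (Finsupp.update f0 1 (f0 1 - 1)) 0 1) 1)).update 1 0) 0
                = 1 + (f0 1 - 1) := by
              rw [upd_apply, if_neg (by omega), upd_apply', upd_apply', upd_apply,
                if_neg (by omega), upd_apply']
            omega
        rw [hsum]
        set D1 := Finsupp.update (Finsupp.update f0 1 (f0 1 - 1)) 0 1 with hD1def
        have hD10 : D1 0 = 1 := upd_apply' _ _ _
        have hD11 : D1 1 = f0 1 - 1 := by
          rw [hD1def, upd_apply, if_neg (by omega), upd_apply']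
        set G1 := (D1.update 0 (D1 0 + D1 1)).update 1 0 with hG1def
        have hG10 : G1 0 = 1 + (f0 1 - 1) := by
          rw [hG1def, upd_apply, if_neg (by omega), upd_apply', hD10, hD11]
        by_cases hf01 : f0 1 = 0
        · -- both sides vanish
          have hl : coeff (R := A i) G1 ↑(γ i) = 0 := by
            by_contra hc
            have := hdvd0 _ hc
            omega
          have hr : coeff (R := A i) F ↑(γ i) = 0 := by
            by_contra hc
            have := hdvd0 _ hc
            omega
          rw [hl, hr]
        · -- G1 = F
          have : G1 = F := by
            ext x
            by_cases hx0 : x = 0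
            · rw [hx0, hG10, hF0]; omega
            by_cases hx1 : x = 1
            · rw [hx1, hF1, hf00, hG1def, upd_apply']
            rw [hFx x hx0 hx1, hG1def, upd_apply, if_neg hx1, upd_apply, if_neg hx0,
              hD1def, upd_apply, if_neg hx0, upd_apply, if_neg hx1]
          rw [this]
      -- now the δ-relation
      set Gfam := Function.update γ i (⟨βs, hβmem⟩ : finVar ℕ (A i)) with hGfamdef
      have hGi : (Gfam i : MvPowerSeries ℕ (A i)) = βs := by
        rw [hGfamdef, Function.update_self]
      set renEl : finVar ℕ (A i) :=
        ⟨renameVars (Equiv.swap 0 1) ↑(γ i), rename_mem (γ i).2⟩ with hrenEldef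
      have hδ := hHdelta i Gfam renEl (by rw [hGi]; exact hP3.symm)
      have hup : Function.update Gfam i renEl = Function.update γ i renEl := by
        rw [hGfamdef, Function.update_idem]
      have hρ := hHrename i (Equiv.swap 0 1) swap_finite γ renEl rfl
      rw [hup, hρ] at hδ
      -- evaluate at fbig
      set fbig := Finsupp.equivMapDomain (blockPerm i (Equiv.swap 0 1)) f with hfbigdef
      have hfb0 : fbig ((i : Fin r), (0:ℕ)) = f (i, 1) := by
        rw [hfbigdef, emd_apply, blockPerm_symm_apply]; simp
      have hfb1 : fbig ((i : Fin r), (1:ℕ)) = f (i, 0) := by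
        rw [hfbigdef, emd_apply, blockPerm_symm_apply]; simp
      have hev := congrFun hδ fbig
      have hlhs : (renameVars (blockPerm i (Equiv.swap 0 1))
          (↑(H γ) : MvPowerSeries (Fin r × ℕ) B)) fbig = coeff (R := B) f ↑(H γ) := by
        show coeff (R := B) (Finsupp.equivMapDomain (blockPerm i (Equiv.swap 0 1)).symm fbig)
          ↑(H γ) = coeff (R := B) f ↑(H γ)
        rw [hfbigdef, emd_emd]
      rw [hlhs] at hev
      rw [hev]
      show (if fbig (i, 0) = 0 then ∑ u ∈ Finset.range (fbig (i, 1) + 1),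
          coeff (R := B) (Finsupp.update (Finsupp.update fbig (i, 1) (fbig (i, 1) - u)) (i, 0) u)
            ↑(H Gfam) else 0) = 0
      rw [if_pos (by rw [hfb0]; exact h1)]
      apply Finset.sum_eq_zero
      intro u hu
      simp only [Finset.mem_range] at hu
      set Eu := Finsupp.update (Finsupp.update fbig (i, 1) (fbig (i, 1) - u)) (i, 0) u
        with hEudef
      have hEu0 : Eu ((i : Fin r), (0:ℕ)) = u := upd_apply' _ _ _
      have hEu1 : Eu ((i : Fin r), (1:ℕ)) = fbig (i, 1) - u := by
        rw [hEudef, upd_apply, if_neg (by simp), upd_apply']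
      by_cases hu0 : u = 0
      · -- use IH at level 1
        refine IH 1 (by omega) Gfam i ?_ Eu (by rw [hEu0, hu0]; omega)
        intro dd hdd
        rw [hGi] at hdd
        exact hP1 dd hdd
      · -- use IH at level K+1, variable 1
        refine keyj_of H hHrename (K + 1) (IH (K + 1) (by omega)) 1 Gfam i ?_ Eu ?_
        · intro dd hdd
          rw [hGi] at hdd
          exact hP2 dd hdd
        · rw [hEu1, hfb1]
          omega
    -- reduce the general case to the `z₁`-absent case by renaming
    obtain ⟨s, hs⟩ := (α i).2
    obtain ⟨m, hm⟩ := Infinite.exists_notMem_finset (insert 0 (insert 1 s))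
    have hm0 : m ≠ 0 := fun h => hm (by simp [h])
    have hm1 : m ≠ 1 := fun h => hm (by simp [h])
    have hms : m ∉ s := fun h => hm (by simp [h])
    set σ : Equiv.Perm ℕ := Equiv.swap 1 m with hσdef
    have hσ0 : σ 0 = 0 := Equiv.swap_apply_of_ne_of_ne (by omega) (fun h => hm0 h.symm)
    have htr := transport H hHrename i σ swap_finite α e
    rw [htr]
    set α' := Function.update α i
      (⟨renameVars σ ↑(α i), rename_mem (α i).2⟩ : finVar ℕ (A i)) with hα'def
    have hα'i : (α' i : MvPowerSeries ℕ (A i)) = renameVars σ ↑(α i) := by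
      rw [hα'def, Function.update_self]
    refine main α' ?_ ?_ _ ?_
    · intro dd hdd
      rw [hα'i, coeff_rename] at hdd
      have := hdvd _ hdd
      rw [emd_apply] at this
      simpa [hσ0] using this
    · intro dd hdd
      rw [hα'i, coeff_rename] at hdd
      have hsub := hs _ hdd
      have hnot : m ∉ (Finsupp.equivMapDomain σ.symm dd).support :=
        fun h => hms (hsub h)
      rw [Finsupp.notMem_support_iff, emd_apply] at hnot
      simpa [hσdef] using hnot
    · rw [emd_apply, blockPerm_symm_apply]
      have hs0 : σ.symm 0 = 0 := by rw [hσdef, Equiv.symm_swap]; exact hσ0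
      simpa [hs0] using he

end withH
end AuxAdm

/-- An admissible `r`-nary transformation `H : R_{A₁} × ⋯ × R_{A_r} → R_B^{(r)}`
(vanishing as soon as one argument vanishes, and commuting in each argument `i` with
the renaming of variables along finitely supported permutations, with the substitution
of `0` for `z₀`, and with the substitution of `z₁` for `z₀`, where on the target these
operations act on the `i`-th block of variables `z(i)_j`) preserves divisibility by
monomials: if `z^{d i}` divides `α i` for each `i`, then the product monomial
`∏ i, z(i)^{d i}` divides `H α`. -/
theorem admissible_poly_preserves_monomial_divisibility
    {r : ℕ} (hr : 1 ≤ r) {A : Fin r → Type*} [∀ i, CommRing (A i)]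
    {B : Type*} [CommRing B]
    (H : (∀ i, finVar ℕ (A i)) → finVar (Fin r × ℕ) B)
    (hH0 : ∀ α : ∀ i, finVar ℕ (A i), (∃ i, α i = 0) → H α = 0)
    (hHrename : ∀ (i : Fin r) (σ : Equiv.Perm ℕ), {x | σ x ≠ x}.Finite →
      ∀ (α : ∀ i, finVar ℕ (A i)) (β : finVar ℕ (A i)),
        (β : MvPowerSeries ℕ (A i)) = renameVars σ ↑(α i) →
        (H (Function.update α i β) : MvPowerSeries (Fin r × ℕ) B) =
          renameVars (blockPerm i σ) ↑(H α))
    (hHeps : ∀ (i : Fin r) (α : ∀ i, finVar ℕ (A i)) (β : finVar ℕ (A i)),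
        (β : MvPowerSeries ℕ (A i)) = substZeroAt 0 ↑(α i) →
        (H (Function.update α i β) : MvPowerSeries (Fin r × ℕ) B) =
          substZeroAt (i, 0) ↑(H α))
    (hHdelta : ∀ (i : Fin r) (α : ∀ i, finVar ℕ (A i)) (β : finVar ℕ (A i)),
        (β : MvPowerSeries ℕ (A i)) = substVarAt 0 1 ↑(α i) →
        (H (Function.update α i β) : MvPowerSeries (Fin r × ℕ) B) =
          substVarAt (i, 0) (i, 1) ↑(H α))
    (d : Fin r → (ℕ →₀ ℕ)) (α : ∀ i, finVar ℕ (A i))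
    (hdvd : ∀ i, MvPowerSeries.monomial (R := A i) (d i) 1 ∣ (α i : MvPowerSeries ℕ (A i))) :
    (∏ i : Fin r, MvPowerSeries.monomial (R := B) (Finsupp.embDomain (blockVar i) (d i)) 1) ∣
      (H α : MvPowerSeries (Fin r × ℕ) B) := by
  classical
  open MvPowerSeries AuxAdm in
  rw [AuxAdm.prod_monomial]
  apply AuxAdm.monomial_dvd_of_coeff
  intro e he
  rw [Finsupp.le_def] at he
  push_neg at he
  obtain ⟨⟨i, j⟩, hp⟩ := he
  have hD : (∑ i' : Fin r, Finsupp.embDomain (blockVar i') (d i')) (i, j) = d i j := by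
    rw [Finsupp.finset_sum_apply]
    rw [Finset.sum_eq_single i]
    · have : (i, j) = blockVar i j := rfl
      rw [this, Finsupp.embDomain_apply_self]
    · intro i' _ hi'
      apply Finsupp.embDomain_notin_range
      rintro ⟨a, ha⟩
      have : i' = i := congrArg Prod.fst ha
      exact hi' this
    · intro hni
      exact absurd (Finset.mem_univ i) hni
  rw [hD] at hp
  have hPd : ∀ dd : ℕ →₀ ℕ, MvPowerSeries.coeff (R := A i) dd ↑(α i) ≠ 0 → d i j ≤ dd j := by
    intro dd hdd
    by_contra hc
    have hnle : ¬ d i ≤ dd := fun hle => hc (hle j)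
    exact hdd (AuxAdm.monomial_dvd_coeff _ _ (hdvd i) dd hnle)
  exact AuxAdm.keyj_of H hHrename (d i j)
    (AuxAdm.key H hH0 hHrename hHeps hHdelta (d i j)) j α i hPd e hp
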